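/- arXiv:1611.00502 — 3 statements merged into one kernel-verified Lean document; each statement's English description precedes it below -/
import Mathlib

section
/- Let $X_1,\dots,X_l$ be mutually independent random variables with values in finite nonempty sets $D_1,\dots,D_l$, let $\Omega=\prod_{i=1}^l D_i$ carry the product probability measure, and let $E_1,\dots,E_m\subseteq\Omega$ be events. If $p\in[0,1]$ satisfies $\Pr[E_j]\le p$ for all $j$, $d\in\mathbb{N}$ satisfies $|\Gamma(E_j)|\le d$ for all $j$ (where $\Gamma$ is the VDL out-neighborhood), and $e\,p\,(d+1)\le 1$, then $\Pr[\overline{E_1}\cap\overline{E_2}\cap\cdots\cap\overline{E_m}]>0$; in particular there exists an assignment $\alpha\in\Omega$ under which none of the events $E_1,\dots,E_m$ occurs. -/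
/-! Variable framework: `l` mutually independent random variables taking values
in finite nonempty sets `D i`; assignments are elements of `Ω = ∀ i, D i`;
the product probability measure is given by weights `w i : D i → ℝ`
(nonnegative, summing to 1 on each coordinate); events are subsets of `Ω`. -/

/-- A set `S` of coordinates determines the event `E` if membership in `E`
only depends on the values of the coordinates in `S`. -/
def Determines {l : ℕ} {D : Fin l → Type*} (S : Set (Fin l))
    (E : Set (∀ i, D i)) : Prop :=
  ∀ α β : ∀ i, D i, (∀ i ∈ S, α i = β i) → (α ∈ E ↔ β ∈ E)

/-- The scope of an event: the minimal set of coordinates that determines it,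
i.e. the intersection of all determining sets of coordinates. -/
def scope {l : ℕ} {D : Fin l → Type*} (E : Set (∀ i, D i)) : Set (Fin l) :=
  ⋂₀ { S : Set (Fin l) | Determines S E }

/-- `Ej` is variable-dependent directed lopsidependent (VDL) on `Ei`:
there is an assignment `α` under which `Ei` occurs and `Ej` does not, and
an assignment `β` differing from `α` only in coordinates in `scope Ei`
under which `Ej` occurs. -/
def VDL {l : ℕ} {D : Fin l → Type*} (Ei Ej : Set (∀ i, D i)) : Prop :=
  ∃ α β : ∀ i, D i,
    α ∈ Ei ∧ α ∉ Ej ∧ (∀ i, i ∉ scope Ei → β i = α i) ∧ β ∈ Ej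

/-- The VDL out-neighborhood `Γ(E j)` of the event `E j` among the events
`E 1, …, E m`: the set of those events that are VDL on `E j`. -/
def Gamma {l m : ℕ} {D : Fin l → Type*} (E : Fin m → Set (∀ i, D i))
    (j : Fin m) : Set (Set (∀ i, D i)) :=
  {F | (∃ k, E k = F) ∧ VDL (E j) F}

/-- The probability of the event `E` under the product probability measure
determined by the coordinate-wise weights `w`. -/
noncomputable def Pr {l : ℕ} {D : Fin l → Type*} [∀ i, Fintype (D i)]
    (w : ∀ i, D i → ℝ) (E : Set (∀ i, D i)) : ℝ :=
  ∑ α : ∀ i, D i, Set.indicator E (fun a => ∏ i, w i (a i)) α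

set_option linter.unusedSectionVars false

open scoped Classical

section Aux

variable {l : ℕ} {D : Fin l → Type*}

/-- Intersection of two determining sets determines. -/
lemma Determines.inter {S₁ S₂ : Set (Fin l)} {E : Set (∀ i, D i)}
    (h₁ : Determines S₁ E) (h₂ : Determines S₂ E) : Determines (S₁ ∩ S₂) E := by
  intro α β hab
  set γ : ∀ i, D i := fun i => if i ∈ S₁ then α i else β i with hγ
  have e1 : α ∈ E ↔ γ ∈ E := h₁ α γ (by intro i hi; simp [hγ, hi])
  have e2 : γ ∈ E ↔ β ∈ E := by
    refine h₂ γ β ?_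
    intro i hi
    by_cases h : i ∈ S₁
    · simpa [hγ, h] using hab i ⟨h, hi⟩
    · simp [hγ, h]
  exact e1.trans e2

lemma determines_scope (E : Set (∀ i, D i)) : Determines (scope E) E := by
  have huniv : Determines (Set.univ) E := fun α β h => by
    have : α = β := funext fun i => h i trivial
    rw [this]
  have key : ∀ 𝒮 : Finset (Set (Fin l)),
      (∀ S ∈ 𝒮, Determines S E) → Determines (⋂₀ ↑𝒮) E := by
    intro 𝒮
    induction 𝒮 using Finset.induction_on with
    | empty => intro _; simpa using huniv
    | @insert S 𝒮' _ ih =>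
      intro hdet
      rw [Finset.coe_insert, Set.sInter_insert]
      exact (hdet S (Finset.mem_insert_self _ _)).inter
        (ih fun T hT => hdet T (Finset.mem_insert_of_mem hT))
  have hfin : {S : Set (Fin l) | Determines S E}.Finite := Set.toFinite _
  have : scope E = ⋂₀ ↑hfin.toFinset := by rw [Set.Finite.coe_toFinset]; rfl
  rw [this]
  exact key _ (fun S hS => (Set.Finite.mem_toFinset hfin).mp hS)

variable [∀ i, Fintype (D i)]

/-- indicator function with value 1. -/
noncomputable def χ (E : Set (∀ i, D i)) (α : ∀ i, D i) : ℝ := if α ∈ E then 1 else 0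

lemma χ_nonneg (E : Set (∀ i, D i)) (α : ∀ i, D i) : 0 ≤ χ E α := by
  unfold χ; split <;> norm_num

lemma χ_le_one (E : Set (∀ i, D i)) (α : ∀ i, D i) : χ E α ≤ 1 := by
  unfold χ; split <;> norm_num

variable (w : ∀ i, D i → ℝ)

lemma Pr_eq (E : Set (∀ i, D i)) :
    Pr w E = ∑ α : ∀ i, D i, χ E α * ∏ i, w i (α i) := by
  unfold Pr χ
  refine Finset.sum_congr rfl fun α _ => ?_
  by_cases h : α ∈ E <;> simp [Set.indicator_apply, h]

variable (hw0 : ∀ i x, 0 ≤ w i x) (hw1 : ∀ i, ∑ x : D i, w i x = 1)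
include hw0 hw1 in
lemma _dummy : True := trivial

include hw0 in
lemma Pr_nonneg (E : Set (∀ i, D i)) : 0 ≤ Pr w E := by
  rw [Pr_eq]
  refine Finset.sum_nonneg fun α _ => mul_nonneg (χ_nonneg _ _) ?_
  exact Finset.prod_nonneg fun i _ => hw0 i _

include hw0 in
lemma Pr_mono {E F : Set (∀ i, D i)} (h : E ⊆ F) : Pr w E ≤ Pr w F := by
  rw [Pr_eq, Pr_eq]
  refine Finset.sum_le_sum fun α _ => ?_
  refine mul_le_mul_of_nonneg_right ?_ (Finset.prod_nonneg fun i _ => hw0 i _)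
  unfold χ
  by_cases hα : α ∈ E
  · simp [hα, h hα]
  · simp [hα, χ_le_one]
    split <;> norm_num

include hw1 in
lemma Pr_univ : Pr w (Set.univ) = 1 := by
  rw [Pr_eq]
  simp only [χ, Set.mem_univ, if_true, one_mul]
  rw [← Fintype.prod_sum (fun i x => w i x)]
  simp [hw1]

lemma Pr_split (F B : Set (∀ i, D i)) :
    Pr w (Fᶜ ∩ B) = Pr w B - Pr w (F ∩ B) := by
  rw [Pr_eq, Pr_eq, Pr_eq, ← Finset.sum_sub_distrib]
  refine Finset.sum_congr rfl fun α _ => ?_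
  rw [← sub_mul]
  congr 1
  unfold χ
  by_cases hF : α ∈ F <;> by_cases hB : α ∈ B <;> simp [hF, hB]

end Aux

section Split

variable {l : ℕ} {D : Fin l → Type*} [∀ i, Fintype (D i)]

/-- merge an assignment on `S` with an assignment off `S`. -/
noncomputable def mrg (S : Set (Fin l)) (x : ∀ i : {i // i ∈ S}, D i)
    (y : ∀ i : {i // i ∉ S}, D i) : ∀ i, D i :=
  fun i => if h : i ∈ S then x ⟨i, h⟩ else y ⟨i, h⟩

lemma mrg_mem {S : Set (Fin l)} (x : ∀ i : {i // i ∈ S}, D i)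
    (y : ∀ i : {i // i ∉ S}, D i) {i : Fin l} (h : i ∈ S) :
    mrg S x y i = x ⟨i, h⟩ := dif_pos h

lemma mrg_not_mem {S : Set (Fin l)} (x : ∀ i : {i // i ∈ S}, D i)
    (y : ∀ i : {i // i ∉ S}, D i) {i : Fin l} (h : i ∉ S) :
    mrg S x y i = y ⟨i, h⟩ := dif_neg h

lemma sum_mrg (S : Set (Fin l)) (f : (∀ i, D i) → ℝ) :
    ∑ α : ∀ i, D i, f α
      = ∑ y : ∀ i : {i // i ∉ S}, D i, ∑ x : ∀ i : {i // i ∈ S}, D i,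
          f (mrg S x y) := by
  rw [← Equiv.sum_comp (Equiv.piEquivPiSubtypeProd (· ∈ S) D).symm f,
    Fintype.sum_prod_type_right]
  rfl

variable (w : ∀ i, D i → ℝ)

lemma prod_mrg (S : Set (Fin l)) (x : ∀ i : {i // i ∈ S}, D i)
    (y : ∀ i : {i // i ∉ S}, D i) :
    (∏ i, w i (mrg S x y i))
      = (∏ i : {i // i ∈ S}, w i.1 (x i)) * ∏ i : {i // i ∉ S}, w i.1 (y i) := by
  rw [← Fintype.prod_subtype_mul_prod_subtype (· ∈ S) (fun i => w i (mrg S x y i))]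
  congr 1
  · exact Finset.prod_congr rfl fun i _ => by rw [mrg_mem x y i.2]
  · exact Finset.prod_congr rfl fun i _ => by rw [mrg_not_mem x y i.2]

variable (hw1 : ∀ i, ∑ x : D i, w i x = 1)

include hw1 in
lemma sum_sub_one (S : Set (Fin l)) :
    ∑ x : ∀ i : {i // i ∈ S}, D i, ∏ i, w i.1 (x i) = 1 := by
  rw [← Fintype.prod_sum (fun (i : {i // i ∈ S}) z => w i.1 z)]
  simp [hw1]

include hw1 in
lemma sum_sub_one' (S : Set (Fin l)) :
    ∑ y : ∀ i : {i // i ∉ S}, D i, ∏ i, w i.1 (y i) = 1 := by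
  rw [← Fintype.prod_sum (fun (i : {i // i ∉ S}) z => w i.1 z)]
  simp [hw1]

end Split

section Fiber

variable {l : ℕ} {D : Fin l → Type*} [∀ i, Fintype (D i)] [∀ i, Nonempty (D i)]
variable (w : ∀ i, D i → ℝ)

/-- The key "lopsided" fiber lemma. -/
lemma fiber_lemma (hw0 : ∀ i x, 0 ≤ w i x) (hw1 : ∀ i, ∑ x : D i, w i x = 1)
    {A B : Set (∀ i, D i)}
    (hB : ∀ α β : ∀ i, D i, α ∈ A → (∀ i, i ∉ scope A → β i = α i) → β ∉ B → α ∉ B) :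
    Pr w (A ∩ B) ≤ Pr w A * Pr w B := by
  set S := scope A with hS
  set X := ∀ i : {i // i ∈ S}, D i
  set Y := ∀ i : {i // i ∉ S}, D i
  set wx : X → ℝ := fun x => ∏ i, w i.1 (x i) with hwx
  set wy : Y → ℝ := fun y => ∏ i, w i.1 (y i) with hwy
  have hwxn : ∀ x : X, 0 ≤ wx x := fun x => Finset.prod_nonneg fun i _ => hw0 _ _
  have hwyn : ∀ y : Y, 0 ≤ wy y := fun y => Finset.prod_nonneg fun i _ => hw0 _ _
  have hPr : ∀ E : Set (∀ i, D i),
      Pr w E = ∑ y : Y, ∑ x : X, wx x * wy y * χ E (mrg S x y) := by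
    intro E
    rw [Pr_eq, sum_mrg S]
    refine Finset.sum_congr rfl fun y _ => Finset.sum_congr rfl fun x _ => ?_
    rw [prod_mrg]; ring
  -- A is determined by its scope
  have hdet := determines_scope A
  have hAfix : ∀ (x : X) (y y' : Y), χ A (mrg S x y) = χ A (mrg S x y') := by
    intro x y y'
    have : mrg S x y ∈ A ↔ mrg S x y' ∈ A := by
      refine hdet _ _ fun i hi => ?_
      simp only [mrg_mem x y hi, mrg_mem x y' hi]
    unfold χ; simp only [this]
  have hY : Nonempty Y := inferInstance
  obtain ⟨y₀⟩ := hY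
  set f : ℝ := ∑ x : X, wx x * χ A (mrg S x y₀) with hf
  have hf0 : 0 ≤ f := Finset.sum_nonneg fun x _ => mul_nonneg (hwxn x) (χ_nonneg _ _)
  set Good : Y → Prop := fun y => ∀ x : X, mrg S x y ∈ B with hGood
  -- the inner sum for A ∩ B
  have key : ∀ y : Y, (∑ x : X, wx x * χ (A ∩ B) (mrg S x y))
      = (if Good y then 1 else 0) * f := by
    intro y
    by_cases hg : Good y
    · rw [if_pos hg, one_mul, hf]
      refine Finset.sum_congr rfl fun x _ => ?_
      rw [hAfix x y₀ y]
      congr 1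
      unfold χ
      have := hg x
      by_cases hA' : mrg S x y ∈ A <;> simp [hA', this]
    · rw [if_neg hg, zero_mul]
      refine Finset.sum_eq_zero fun x _ => ?_
      have : mrg S x y ∉ A ∩ B := by
        rintro ⟨hxA, hxB⟩
        obtain ⟨x₀, hx₀⟩ := not_forall.mp hg
        refine hB (mrg S x y) (mrg S x₀ y) hxA ?_ hx₀ hxB
        intro i hi
        simp only [mrg_not_mem x y hi, mrg_not_mem x₀ y hi]
      unfold χ; simp [this]
  -- Pr A = f
  have hPrA : Pr w A = f := by
    rw [hPr A]
    have : ∀ y : Y, (∑ x : X, wx x * wy y * χ A (mrg S x y)) = wy y * f := by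
      intro y
      rw [hf, Finset.mul_sum]
      refine Finset.sum_congr rfl fun x _ => ?_
      rw [hAfix x y₀ y]; ring
    rw [Finset.sum_congr rfl fun y _ => this y, ← Finset.sum_mul,
      sum_sub_one' w hw1, one_mul]
  -- Pr (A ∩ B) = f * G
  set G : ℝ := ∑ y : Y, wy y * (if Good y then 1 else 0) with hG
  have hPrAB : Pr w (A ∩ B) = f * G := by
    rw [hPr (A ∩ B), hG, Finset.mul_sum]
    refine Finset.sum_congr rfl fun y _ => ?_
    have : (∑ x : X, wx x * wy y * χ (A ∩ B) (mrg S x y))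
        = wy y * ∑ x : X, wx x * χ (A ∩ B) (mrg S x y) := by
      rw [Finset.mul_sum]; exact Finset.sum_congr rfl fun x _ => by ring
    rw [this, key y]; ring
  -- G ≤ Pr B
  have hGB : G ≤ Pr w B := by
    rw [hPr B, hG]
    refine Finset.sum_le_sum fun y _ => ?_
    by_cases hg : Good y
    · rw [if_pos hg]
      have : (∑ x : X, wx x * wy y * χ B (mrg S x y)) = wy y * 1 := by
        rw [← sum_sub_one w hw1 S, Finset.mul_sum]
        refine Finset.sum_congr rfl fun x _ => ?_
        have : χ B (mrg S x y) = 1 := by unfold χ; simp [hg x]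
        rw [this]; ring
      rw [this]
    · rw [if_neg hg, mul_zero]
      exact Finset.sum_nonneg fun x _ => mul_nonneg
        (mul_nonneg (hwxn x) (hwyn y)) (χ_nonneg _ _)
  calc Pr w (A ∩ B) = f * G := hPrAB
    _ ≤ f * Pr w B := by exact mul_le_mul_of_nonneg_left hGB hf0
    _ = Pr w A * Pr w B := by rw [hPrA]

end Fiber

section Main

variable {l m : ℕ} {D : Fin l → Type*} [∀ i, Fintype (D i)] [∀ i, Nonempty (D i)]

/-- The intersection of the complements of a finite collection of events. -/
def CT (T : Finset (Set (∀ i, D i))) : Set (∀ i, D i) := ⋂ F ∈ T, Fᶜ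

lemma mem_CT {T : Finset (Set (∀ i, D i))} {α : ∀ i, D i} :
    α ∈ CT T ↔ ∀ F ∈ T, α ∉ F := by simp [CT]

lemma CT_empty : CT (∅ : Finset (Set (∀ i, D i))) = Set.univ := by
  ext α; simp [mem_CT]

lemma CT_insert (F : Set (∀ i, D i)) (T : Finset (Set (∀ i, D i))) :
    CT (insert F T) = Fᶜ ∩ CT T := by
  ext α
  simp only [mem_CT, Finset.mem_insert, Set.mem_inter_iff, Set.mem_compl_iff]
  constructor
  · intro h; exact ⟨h F (Or.inl rfl), fun G hG => h G (Or.inr hG)⟩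
  · rintro ⟨h1, h2⟩ G (rfl | hG)
    · exact h1
    · exact h2 G hG

lemma CT_mono {T T' : Finset (Set (∀ i, D i))} (h : T ⊆ T') : CT T' ⊆ CT T := by
  intro α hα
  rw [mem_CT] at *
  exact fun F hF => hα F (h hF)

variable (w : ∀ i, D i → ℝ) (E : Fin m → Set (∀ i, D i)) (p x : ℝ) (d : ℕ)

lemma main_bound
    (hw0 : ∀ i x, 0 ≤ w i x) (hw1 : ∀ i, ∑ x : D i, w i x = 1)
    (hpE : ∀ j, Pr w (E j) ≤ p)
    (hd : ∀ j, (Gamma E j).ncard ≤ d)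
    (hx0 : 0 < x) (hx1 : x < 1) (hpx : p ≤ x * (1 - x) ^ d) :
    ∀ n (T : Finset (Set (∀ i, D i))), T.card ≤ n → (∀ F ∈ T, ∃ k, E k = F) →
      ∀ j, Pr w (E j ∩ CT T) ≤ x * Pr w (CT T) := by
  have h1x0 : (0:ℝ) ≤ 1 - x := by linarith
  have h1x1 : 1 - x ≤ 1 := by linarith
  intro n
  induction n with
  | zero =>
    intro T hcard _ j
    have hT : T = ∅ := Finset.card_eq_zero.mp (Nat.le_zero.mp hcard)
    subst hT
    rw [CT_empty, Set.inter_univ, Pr_univ w hw1, mul_one]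
    calc Pr w (E j) ≤ p := hpE j
      _ ≤ x * (1 - x) ^ d := hpx
      _ ≤ x * 1 := by
          refine mul_le_mul_of_nonneg_left ?_ hx0.le
          exact pow_le_one₀ h1x0 h1x1
      _ = x := mul_one x
  | succ n ih =>
    intro T hcard hT j
    set N : Finset (Set (∀ i, D i)) := T.filter (· ∈ Gamma E j) with hN
    set M : Finset (Set (∀ i, D i)) := T.filter (· ∉ Gamma E j) with hM
    have hMT : M ⊆ T := Finset.filter_subset _ _
    have hNT : N ⊆ T := Finset.filter_subset _ _
    have hMN : M ∪ N = T := by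
      rw [hM, hN, Finset.union_comm]
      exact Finset.filter_union_filter_not_eq _ T
    -- step 1 : monotonicity
    have step1 : Pr w (E j ∩ CT T) ≤ Pr w (E j ∩ CT M) :=
      Pr_mono w hw0 (Set.inter_subset_inter_right _ (CT_mono hMT))
    -- step 2 : fiber lemma
    have step2 : Pr w (E j ∩ CT M) ≤ Pr w (E j) * Pr w (CT M) := by
      refine fiber_lemma w hw0 hw1 ?_
      intro α β hα hagree hβ hαC
      rw [mem_CT] at hβ hαC
      push_neg at hβ
      obtain ⟨F, hFM, hβF⟩ := hβ
      have hFG : F ∉ Gamma E j := (Finset.mem_filter.mp hFM).2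
      have hFk : ∃ k, E k = F := hT F (hMT hFM)
      have hnVDL : ¬ VDL (E j) F := fun hv => hFG ⟨hFk, hv⟩
      have hαF : α ∈ F := by
        by_contra hαF
        exact hnVDL ⟨α, β, hα, hαF, hagree, hβF⟩
      exact hαC F hFM hαF
    -- the peeling step
    have peel : ∀ N' : Finset (Set (∀ i, D i)), N' ⊆ N →
        (1 - x) ^ N'.card * Pr w (CT M) ≤ Pr w (CT (M ∪ N')) := by
      intro N'
      induction N' using Finset.induction_on with
      | empty => simp
      | @insert F N' hFN' ihN =>
        intro hins
        have hFN : F ∈ N := hins (Finset.mem_insert_self _ _)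
        have hFT : F ∈ T := hNT hFN
        have hFM : F ∉ M := by
          intro hFM
          exact (Finset.mem_filter.mp hFM).2 (Finset.mem_filter.mp hFN).2
        obtain ⟨k, hk⟩ := hT F hFT
        have hsub : M ∪ N' ⊆ T.erase F := by
          intro G hG
          rw [Finset.mem_erase]
          rcases Finset.mem_union.mp hG with hGM | hGN'
          · exact ⟨fun hGF => hFM (hGF ▸ hGM), hMT hGM⟩
          · exact ⟨fun hGF => hFN' (hGF ▸ hGN'), hNT (hins (Finset.mem_insert_of_mem hGN'))⟩
        have hcard' : (M ∪ N').card ≤ n := by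
          have h1 : (M ∪ N').card ≤ (T.erase F).card := Finset.card_le_card hsub
          have h2 : (T.erase F).card = T.card - 1 := Finset.card_erase_of_mem hFT
          omega
        have hTsub : ∀ G ∈ M ∪ N', ∃ k', E k' = G := by
          intro G hG
          rcases Finset.mem_union.mp hG with hGM | hGN'
          · exact hT G (hMT hGM)
          · exact hT G (hNT (hins (Finset.mem_insert_of_mem hGN')))
        have hih := ih (M ∪ N') hcard' hTsub k
        rw [hk] at hih
        have heq : CT (M ∪ insert F N') = Fᶜ ∩ CT (M ∪ N') := by
          rw [Finset.union_insert, CT_insert]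
        have hPrsplit : Pr w (CT (M ∪ insert F N'))
            = Pr w (CT (M ∪ N')) - Pr w (F ∩ CT (M ∪ N')) := by
          rw [heq, Pr_split]
        have hge : (1 - x) * Pr w (CT (M ∪ N')) ≤ Pr w (CT (M ∪ insert F N')) := by
          rw [hPrsplit]; nlinarith [hih]
        have hprev := ihN (fun G hG => hins (Finset.mem_insert_of_mem hG))
        calc (1 - x) ^ (insert F N').card * Pr w (CT M)
            = (1 - x) ^ (N'.card + 1) * Pr w (CT M) := by
              rw [Finset.card_insert_of_notMem hFN']
          _ = (1 - x) * ((1 - x) ^ N'.card * Pr w (CT M)) := by ring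
          _ ≤ (1 - x) * Pr w (CT (M ∪ N')) := by
              exact mul_le_mul_of_nonneg_left hprev h1x0
          _ ≤ Pr w (CT (M ∪ insert F N')) := hge
    have hNcard : N.card ≤ d := by
      have h1 : (↑N : Set (Set (∀ i, D i))) ⊆ Gamma E j := by
        intro F hF
        exact (Finset.mem_filter.mp hF).2
      have hfin : (Gamma E j).Finite := by
        refine Set.Finite.subset (Set.finite_range E) ?_
        intro F hF
        obtain ⟨k, hk⟩ := hF.1
        exact ⟨k, hk⟩
      calc N.card = (↑N : Set (Set (∀ i, D i))).ncard := (Set.ncard_coe_finset N).symm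
        _ ≤ (Gamma E j).ncard := Set.ncard_le_ncard h1 hfin
        _ ≤ d := hd j
    have hPrM0 : 0 ≤ Pr w (CT M) := Pr_nonneg w hw0 _
    calc Pr w (E j ∩ CT T) ≤ Pr w (E j ∩ CT M) := step1
      _ ≤ Pr w (E j) * Pr w (CT M) := step2
      _ ≤ p * Pr w (CT M) := mul_le_mul_of_nonneg_right (hpE j) hPrM0
      _ ≤ (x * (1 - x) ^ d) * Pr w (CT M) := mul_le_mul_of_nonneg_right hpx hPrM0
      _ = x * ((1 - x) ^ d * Pr w (CT M)) := by ring
      _ ≤ x * ((1 - x) ^ N.card * Pr w (CT M)) := by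
          refine mul_le_mul_of_nonneg_left (mul_le_mul_of_nonneg_right ?_ hPrM0) hx0.le
          exact pow_le_pow_of_le_one h1x0 h1x1 hNcard
      _ ≤ x * Pr w (CT (M ∪ N)) := mul_le_mul_of_nonneg_left (peel N (le_refl N)) hx0.le
      _ = x * Pr w (CT T) := by rw [hMN]

lemma main_pos
    (hw0 : ∀ i x, 0 ≤ w i x) (hw1 : ∀ i, ∑ x : D i, w i x = 1)
    (hpE : ∀ j, Pr w (E j) ≤ p)
    (hd : ∀ j, (Gamma E j).ncard ≤ d)
    (hx0 : 0 < x) (hx1 : x < 1) (hpx : p ≤ x * (1 - x) ^ d) :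
    ∀ T : Finset (Set (∀ i, D i)), (∀ F ∈ T, ∃ k, E k = F) → 0 < Pr w (CT T) := by
  intro T
  induction T using Finset.induction_on with
  | empty => intro _; rw [CT_empty, Pr_univ w hw1]; norm_num
  | @insert F T hFT ihT =>
    intro hT
    obtain ⟨k, hk⟩ := hT F (Finset.mem_insert_self _ _)
    have hpos := ihT fun G hG => hT G (Finset.mem_insert_of_mem hG)
    have hb := main_bound w E p x d hw0 hw1 hpE hd hx0 hx1 hpx T.card T (le_refl _)
      (fun G hG => hT G (Finset.mem_insert_of_mem hG)) k
    rw [hk] at hb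
    rw [CT_insert, Pr_split]
    nlinarith [hb, hpos]

end Main

/-- Numeric choice of `x`. -/
lemma choose_x (d : ℕ) (p : ℝ) (hp0 : 0 ≤ p)
    (h : Real.exp 1 * p * (d + 1) ≤ 1) :
    ∃ x : ℝ, 0 < x ∧ x < 1 ∧ p ≤ x * (1 - x) ^ d := by
  have he2 : (2:ℝ) ≤ Real.exp 1 := by
    have := Real.add_one_le_exp (1:ℝ); linarith
  rcases Nat.eq_zero_or_pos d with hd0 | hd1
  · subst hd0
    refine ⟨1/2, by norm_num, by norm_num, ?_⟩
    simp only [pow_zero, mul_one]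
    push_cast at h
    nlinarith
  · set dR : ℝ := (d : ℝ) with hdR
    have hdR1 : (1:ℝ) ≤ dR := by rw [hdR]; exact_mod_cast hd1
    have hdRpos : 0 < dR := by linarith
    refine ⟨1/(dR + 1), by positivity, ?_, ?_⟩
    · rw [div_lt_one (by linarith)]; linarith
    · have key : (1 + 1/dR) ^ d ≤ Real.exp 1 := by
        have h1 : (1 + 1/dR) ≤ Real.exp (1/dR) := by
          have := Real.add_one_le_exp (1/dR); linarith
        calc (1 + 1/dR) ^ d ≤ (Real.exp (1/dR)) ^ d := by
              refine pow_le_pow_left₀ (by positivity) h1 d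
          _ = Real.exp (d * (1/dR)) := by
              rw [← Real.exp_nat_mul]
          _ = Real.exp 1 := by
              congr 1
              field_simp
              rfl
      have h1x : 1 - 1/(dR + 1) = (1 + 1/dR)⁻¹ := by
        have hne : (1:ℝ) + 1/dR ≠ 0 := by positivity
        rw [eq_comm, inv_eq_iff_eq_inv, eq_comm, inv_eq_one_div]
        field_simp
        rw [add_sub_cancel_right, div_self hdRpos.ne']
      have hpow : (Real.exp 1)⁻¹ ≤ (1 - 1/(dR+1)) ^ d := by
        rw [h1x, inv_pow]
        exact inv_anti₀ (by positivity) key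
      have hple : p ≤ 1 / (Real.exp 1 * (dR + 1)) := by
        rw [le_div_iff₀ (by positivity)]
        nlinarith [h]
      calc p ≤ 1 / (Real.exp 1 * (dR + 1)) := hple
        _ = (1/(dR+1)) * (Real.exp 1)⁻¹ := by
            rw [one_div, mul_inv, inv_eq_one_div]
            ring
        _ ≤ (1/(dR+1)) * (1 - 1/(dR+1)) ^ d := by
            refine mul_le_mul_of_nonneg_left hpow (by positivity)


/-- Symmetric Lopsided Local Lemma for VDL (Theorem 1): if every event has
probability at most `p`, every VDL out-neighborhood has size at most `d`,
and `e·p·(d+1) ≤ 1`, then the probability that none of the events occurs is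
positive; in particular some assignment avoids all the events. -/
theorem symmetric_lopsided_LLL_VDL
    {l m : ℕ} {D : Fin l → Type*} [∀ i, Fintype (D i)] [∀ i, Nonempty (D i)]
    (w : ∀ i, D i → ℝ) (hw0 : ∀ i x, 0 ≤ w i x)
    (hw1 : ∀ i, ∑ x : D i, w i x = 1)
    (E : Fin m → Set (∀ i, D i))
    (p : ℝ) (hp : p ∈ Set.Icc (0 : ℝ) 1)
    (hpE : ∀ j, Pr w (E j) ≤ p)
    (d : ℕ) (hd : ∀ j, (Gamma E j).ncard ≤ d)
    (h : Real.exp 1 * p * (d + 1) ≤ 1) :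
    0 < Pr w (⋂ j, (E j)ᶜ) ∧ ∃ α : ∀ i, D i, ∀ j, α ∉ E j := by
  obtain ⟨x, hx0, hx1, hpx⟩ := choose_x d p hp.1 h
  set T : Finset (Set (∀ i, D i)) := Finset.image E Finset.univ with hT
  have hTsub : ∀ F ∈ T, ∃ k, E k = F := by
    intro F hF
    obtain ⟨k, _, hk⟩ := Finset.mem_image.mp hF
    exact ⟨k, hk⟩
  have hpos := main_pos w E p x d hw0 hw1 hpE hd hx0 hx1 hpx T hTsub
  have heq : (⋂ j, (E j)ᶜ) = CT T := by
    ext α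
    simp only [Set.mem_iInter, Set.mem_compl_iff, mem_CT, hT, Finset.mem_image,
      Finset.mem_univ, true_and]
    constructor
    · rintro hj F ⟨k, hk⟩
      rw [← hk]; exact hj k
    · intro hF j
      exact hF (E j) ⟨j, rfl⟩
  rw [heq]
  refine ⟨hpos, ?_⟩
  rcases Set.eq_empty_or_nonempty (CT T : Set (∀ i, D i)) with hemp | ⟨α, hα⟩
  · exfalso
    have : Pr w (CT T) = 0 := by
      rw [hemp]
      unfold Pr
      simp
    rw [this] at hpos
    exact lt_irrefl 0 hpos
  · refine ⟨α, fun j => ?_⟩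
    rw [← heq] at hα
    exact Set.mem_iInter.mp hα j
end

section
/- Two events $E_i, E_j$ (with $i,j\in\{1,\dots,m\}$) in the variable framework are lopsidependent in the sense of Moser and Tardos if and only if $E_j\in\Gamma(E_i)$ or $E_i\in\Gamma(E_j)$, where $\Gamma$ is the VDL out-neighborhood. Consequently, the Moser–Tardos lopsidependency graph of the events is the undirected graph underlying their VDL graph. -/
/-- Moser–Tardos lopsidependency: there exist assignments `α, β` differing
only on coordinates in `scope Ei ∩ scope Ej` such that `Ei` occurs under `α`,
`Ej` occurs under `β`, and either `Ei` does not occur under `β` or `Ej` does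
not occur under `α`. -/
def Lopsidependent {l : ℕ} {D : Fin l → Type*}
    (Ei Ej : Set (∀ i, D i)) : Prop :=
  ∃ α β : ∀ i, D i,
    (∀ i, i ∉ scope Ei ∩ scope Ej → α i = β i) ∧
    α ∈ Ei ∧ β ∈ Ej ∧ (β ∉ Ei ∨ α ∉ Ej)

theorem det_inter {l : ℕ} {D : Fin l → Type*} {S T : Set (Fin l)}
    {E : Set (∀ i, D i)} (hS : Determines S E) (hT : Determines T E) :
    Determines (S ∩ T) E := by
  intro α β h
  classical
  set γ : ∀ i, D i := fun i => if i ∈ S then α i else β i with hγ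
  have h1 : α ∈ E ↔ γ ∈ E := hS α γ (fun i hi => by simp [hγ, hi])
  have h2 : γ ∈ E ↔ β ∈ E := by
    refine hT γ β (fun i hi => ?_)
    by_cases hiS : i ∈ S
    · simp only [hγ, if_pos hiS]
      exact h i ⟨hiS, hi⟩
    · simp [hγ, hiS]
  exact h1.trans h2

theorem scope_determines {l : ℕ} {D : Fin l → Type*} (E : Set (∀ i, D i)) :
    Determines (scope E) E := by
  have key : ∀ C : Set (Set (Fin l)), C.Finite → (∀ S ∈ C, Determines S E) →
      Determines (⋂₀ C) E := by
    intro C hC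
    refine Set.Finite.induction_on (motive := fun s _ => (∀ S ∈ s, Determines S E) →
        Determines (⋂₀ s) E) C hC ?_ ?_
    · intro _ α β h
      have : α = β := funext fun k => h k (by simp)
      rw [this]
    · intro a s _ _ ih hmem
      rw [Set.sInter_insert]
      exact det_inter (hmem a (Set.mem_insert a s))
        (ih fun S hS => hmem S (Set.mem_insert_of_mem a hS))
  exact key _ (Set.toFinite _) (fun S hS => hS)

/-- Claim 1: two events are Moser–Tardos lopsidependent iff one of them is in
the VDL out-neighborhood of the other; hence the Moser–Tardos lopsidependency
graph is the undirected graph underlying the VDL graph. -/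
theorem lopsidependent_iff_VDL
    {l m : ℕ} {D : Fin l → Type*} [∀ i, Fintype (D i)] [∀ i, Nonempty (D i)]
    (E : Fin m → Set (∀ i, D i)) (i j : Fin m) :
    Lopsidependent (E i) (E j) ↔ E j ∈ Gamma E i ∨ E i ∈ Gamma E j := by
  classical
  constructor
  · rintro ⟨α, β, hagree, hαi, hβj, hcase⟩
    rcases hcase with hβi | hαj
    · -- VDL (E j) (E i) with witnesses β, α
      refine Or.inr ⟨⟨i, rfl⟩, β, α, hβj, hβi, fun k hk => ?_, hαi⟩
      exact hagree k (fun hmem => hk hmem.2)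
    · refine Or.inl ⟨⟨j, rfl⟩, α, β, hαi, hαj, fun k hk => ?_, hβj⟩
      exact (hagree k (fun hmem => hk hmem.1)).symm
  · rintro (⟨_, α, β, hαi, hαj, hβ, hβj⟩ | ⟨_, α, β, hαj, hαi, hβ, hβi⟩)
    · -- VDL (E i) (E j) : construct γ = β on scope (E j), α elsewhere
      set γ : ∀ k, D k := fun k => if k ∈ scope (E j) then β k else α k with hγ
      have hγj : γ ∈ E j :=
        (scope_determines (E j) β γ (fun k hk => by simp [hγ, hk])).mp hβj
      refine ⟨α, γ, fun k hk => ?_, hαi, hγj, Or.inr hαj⟩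
      by_cases hkj : k ∈ scope (E j)
      · have hki : k ∉ scope (E i) := fun h => hk ⟨h, hkj⟩
        simp only [hγ, if_pos hkj]
        exact (hβ k hki).symm
      · simp [hγ, hkj]
    · set γ : ∀ k, D k := fun k => if k ∈ scope (E i) then β k else α k with hγ
      have hγi : γ ∈ E i :=
        (scope_determines (E i) β γ (fun k hk => by simp [hγ, hk])).mp hβi
      refine ⟨γ, α, fun k hk => ?_, hγi, hαj, Or.inl hαi⟩
      · by_cases hki : k ∈ scope (E i)
        · have hkj : k ∉ scope (E j) := fun h => hk ⟨hki, h⟩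
          simp only [hγ, if_pos hki]
          exact hβ k hkj
        · simp [hγ, hki]
end

section
/- Let $X_1,\dots,X_l$ be mutually independent random variables with values in finite nonempty sets $D_1,\dots,D_l$, let $\Omega=\prod_{i=1}^l D_i$ carry the product probability measure, and let $E,F\subseteq\Omega$ be events. Suppose $S\subseteq\{1,\dots,l\}$ is a set of coordinates such that membership in $E$ is determined by the values of the coordinates in $S$, and suppose that for every assignment $\alpha\in E\cap F$ and every assignment $\beta$ that differs from $\alpha$ only in coordinates in $S$, one has $\beta\in F$. Then $\Pr[E\cap F]\le \Pr[E]\cdot\Pr[F]$. -/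
/-- The core correlation inequality in the proof of Lemma 1: if membership in
`E` is determined by the coordinates in `S`, and `F` is closed under changing
the coordinates in `S` of any assignment in `E ∩ F`, then
`Pr[E ∩ F] ≤ Pr[E] · Pr[F]`. -/
theorem pr_inter_le_mul_of_determined
    {l : ℕ} {D : Fin l → Type*} [∀ i, Fintype (D i)] [∀ i, Nonempty (D i)]
    (w : ∀ i, D i → ℝ) (hw0 : ∀ i x, 0 ≤ w i x)
    (hw1 : ∀ i, ∑ x : D i, w i x = 1)
    (E F : Set (∀ i, D i)) (S : Set (Fin l))
    (hS : Determines S E)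
    (hF : ∀ α ∈ E ∩ F, ∀ β : ∀ i, D i, (∀ i, i ∉ S → β i = α i) → β ∈ F) :
    Pr w (E ∩ F) ≤ Pr w E * Pr w F := by
  unfold Pr
  classical
  set W : (∀ i, D i) → ℝ := fun α => ∏ i, w i (α i) with hW
  have hWnn : ∀ α, 0 ≤ W α := fun α => Finset.prod_nonneg fun i _ => hw0 i (α i)
  have hInn : ∀ (G : Set (∀ i, D i)) α, 0 ≤ Set.indicator G W α :=
    fun G α => Set.indicator_nonneg (fun a _ => hWnn a) α
  set c : (∀ i, D i) → (∀ i, D i) → (∀ i, D i) :=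
    fun α β i => if i ∈ S then α i else β i with hc
  have key : ∀ α β, W (c α β) * W (c β α) = W α * W β := by
    intro α β
    simp only [hW, ← Finset.prod_mul_distrib]
    refine Finset.prod_congr rfl fun i _ => ?_
    by_cases h : i ∈ S <;> simp [hc, h, mul_comm]
  have hΩ : ∑ β : ∀ i, D i, W β = 1 := by
    rw [hW, ← Fintype.prod_sum]
    simp [hw1]
  have hσ : Function.Involutive
      (fun p : (∀ i, D i) × (∀ i, D i) => (c p.1 p.2, c p.2 p.1)) := by
    intro p
    refine Prod.ext (funext fun i => ?_) (funext fun i => ?_) <;>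
      · by_cases h : i ∈ S <;> simp [hc, h]
  set σ := hσ.toPerm with hσ'
  set f : (∀ i, D i) × (∀ i, D i) → ℝ :=
    fun p => Set.indicator E W p.1 * Set.indicator F W p.2 with hf
  have hrhs : (∑ α : ∀ i, D i, Set.indicator E W α)
      * (∑ α : ∀ i, D i, Set.indicator F W α) = ∑ p, f p := by
    simp only [Fintype.sum_prod_type, Finset.sum_mul, hf]
    exact Finset.sum_congr rfl fun α _ => by rw [Finset.mul_sum]
  have hlhs : (∑ α : ∀ i, D i, Set.indicator (E ∩ F) W α)
      = ∑ p : (∀ i, D i) × (∀ i, D i), Set.indicator (E ∩ F) W p.1 * W p.2 := by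
    simp only [Fintype.sum_prod_type]
    refine Finset.sum_congr rfl fun α _ => ?_
    calc Set.indicator (E ∩ F) W α
        = Set.indicator (E ∩ F) W α * ∑ x, W x := by rw [hΩ, mul_one]
      _ = _ := Finset.mul_sum _ _ _
  rw [hrhs, hlhs, ← Equiv.sum_comp σ f]
  refine Finset.sum_le_sum fun p _ => ?_
  by_cases h : p.1 ∈ E ∩ F
  · have h1 : c p.1 p.2 ∈ E :=
      (hS p.1 (c p.1 p.2) fun i hi => by simp [hc, hi]).mp h.1
    have h2 : c p.2 p.1 ∈ F := hF p.1 h (c p.2 p.1) fun i hi => by simp [hc, hi]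
    have : f (σ p) = W (c p.1 p.2) * W (c p.2 p.1) := by
      simp [hf, hσ', Function.Involutive.coe_toPerm, Set.indicator_of_mem h1,
        Set.indicator_of_mem h2]
    rw [this, key, Set.indicator_of_mem h]
  · rw [Set.indicator_of_notMem h, zero_mul]
    exact mul_nonneg (hInn _ _) (hInn _ _)
end
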